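/- arXiv:2106.03425 — 2 statements merged into one kernel-verified Lean document; each statement's English description precedes it below -/
import Mathlib

section
/- Let G be a graph, and suppose there exists a set S of at most k edges of G such that contracting the edges of S yields a planar graph. Then there exists a set T of at most k vertices of G such that deleting T from G yields a planar graph. -/
open SimpleGraph

/-- `H` is a minor of `G`, witnessed by a family of nonempty, connected, pairwise disjoint
branch sets, one for each vertex of `H`, such that adjacent vertices of `H` have branch
sets joined by an edge of `G`. -/
def SimpleGraph.IsMinorOf {W V : Type*} (H : SimpleGraph W) (G : SimpleGraph V) : Prop :=
  ∃ B : W → Set V,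
    (∀ w, (G.induce (B w)).Connected) ∧
    (Pairwise fun w₁ w₂ => Disjoint (B w₁) (B w₂)) ∧
    (∀ w₁ w₂, H.Adj w₁ w₂ → ∃ u ∈ B w₁, ∃ v ∈ B w₂, G.Adj u v)

/-- Planarity, via Wagner's characterization: a graph is planar iff it has neither a
`K₅` minor nor a `K_{3,3}` minor. -/
def SimpleGraph.IsPlanar {V : Type*} (G : SimpleGraph V) : Prop :=
  ¬ (completeGraph (Fin 5)).IsMinorOf G ∧
  ¬ (completeBipartiteGraph (Fin 3) (Fin 3)).IsMinorOf G

/-- The graph obtained from `G` by deleting the vertex set `S` (with all incident edges),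
i.e. the subgraph induced on `V \ S`. -/
abbrev SimpleGraph.deleteVertexSet {V : Type*} (G : SimpleGraph V) (S : Set V) :
    SimpleGraph {v : V // v ∉ S} :=
  G.induce {v : V | v ∉ S}

/-- The graph obtained from `G` by contracting the set `S` of edges: its vertices are the
connected components of the spanning subgraph with edge set `S`, and two distinct
components are adjacent iff `G` has an edge between them (loops and multiple edges
arising from the contraction are discarded). -/
def SimpleGraph.contractEdges {V : Type*} (G : SimpleGraph V) (S : Set (Sym2 V)) :
    SimpleGraph (SimpleGraph.fromEdgeSet S).ConnectedComponent where
  Adj c d := c ≠ d ∧ ∃ u v : V, G.Adj u v ∧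
    (SimpleGraph.fromEdgeSet S).connectedComponentMk u = c ∧
    (SimpleGraph.fromEdgeSet S).connectedComponentMk v = d
  symm := by
    constructor
    rintro c d ⟨hne, u, v, hadj, hu, hv⟩
    exact ⟨hne.symm, v, u, hadj.symm, hv, hu⟩
  loopless := by constructor; rintro c ⟨hne, -⟩; exact hne rfl

/-!
Let `F` be the spanning subgraph with edge set `S`. Each edge of `S` merges at most two
components, so `F` has at least `|V| - |S|` components. Deleting every vertex except one
representative per component deletes at most `|S|` vertices, and sending each remaining vertex
to its component embeds `G - T` injectively and edge-preservingly into `G / S`. A `K₅` or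
`K₃,₃` minor of `G - T` would then be one of `G / S`.
-/

namespace SimpleGraph

variable {V : Type*}

lemma Reachable.sup_edge_cases {F : SimpleGraph V} {a b u v : V}
    (h : (F ⊔ edge a b).Reachable u v) :
    F.Reachable u v ∨ (F.Reachable u a ∧ F.Reachable b v) ∨
      (F.Reachable u b ∧ F.Reachable a v) := by
  obtain ⟨w⟩ := h
  induction w with
  | nil => exact .inl .rfl
  | @cons u x v hux _ ih =>
    rcases hux with hux | hux
    · rcases ih with hxv | ⟨hxa, hbv⟩ | ⟨hxb, hav⟩
      · exact .inl (hux.reachable.trans hxv)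
      · exact .inr (.inl ⟨hux.reachable.trans hxa, hbv⟩)
      · exact .inr (.inr ⟨hux.reachable.trans hxb, hav⟩)
    · rcases ((edge_adj ..).mp hux).1 with ⟨rfl, rfl⟩ | ⟨rfl, rfl⟩
      · rcases ih with hxv | ⟨-, hxv⟩ | ⟨-, hxv⟩
        · exact .inr (.inl ⟨.rfl, hxv⟩)
        · exact .inr (.inl ⟨.rfl, hxv⟩)
        · exact .inl hxv
      · rcases ih with hxv | ⟨-, hxv⟩ | ⟨-, hxv⟩
        · exact .inr (.inr ⟨.rfl, hxv⟩)
        · exact .inl hxv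
        · exact .inr (.inr ⟨.rfl, hxv⟩)

/-- The induced map on components is injective away from the component of `b`. -/
lemma ConnectedComponent.card_le_card_sup_edge_add_one [Finite V] (F : SimpleGraph V) (a b : V) :
    Nat.card F.ConnectedComponent ≤ Nat.card (F ⊔ edge a b).ConnectedComponent + 1 := by
  classical
  let g (c : F.ConnectedComponent) : Option (F ⊔ edge a b).ConnectedComponent :=
    if c = F.connectedComponentMk b then none else some (c.map (.ofLE le_sup_left))
  have hg : g.Injective := by
    intro x y hxy
    by_cases hx : x = F.connectedComponentMk b <;> by_cases hy : y = F.connectedComponentMk b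
    · rw [hx, hy]
    all_goals simp only [g, hx, hy, if_true, if_false, reduceCtorEq, Option.some.injEq] at hxy
    obtain ⟨u, rfl⟩ := x.exists_rep
    obtain ⟨v, rfl⟩ := y.exists_rep
    rcases Reachable.sup_edge_cases (ConnectedComponent.exact hxy) with huv | ⟨-, hbv⟩ | ⟨hub, -⟩
    · exact ConnectedComponent.sound huv
    · exact absurd (ConnectedComponent.sound hbv.symm) hy
    · exact absurd (ConnectedComponent.sound hub) hx
  simpa only [Finite.card_option] using Nat.card_le_card_of_injective g hg

lemma card_le_card_connectedComponent_fromEdgeSet_add_card [Finite V] (S : Finset (Sym2 V)) :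
    Nat.card V ≤ Nat.card (fromEdgeSet (S : Set (Sym2 V))).ConnectedComponent + S.card := by
  classical
  induction S using Finset.induction_on with
  | empty =>
    have hbij : (⊥ : SimpleGraph V).connectedComponentMk.Bijective :=
      ⟨fun _ _ h => reachable_bot.mp (ConnectedComponent.exact h), fun c => c.exists_rep⟩
    simp [Nat.card_eq_of_bijective _ hbij]
  | @insert e S he ih =>
    induction e using Sym2.ind with
    | _ a b =>
    have hadd : fromEdgeSet (↑(insert s(a, b) S) : Set (Sym2 V)) =
        fromEdgeSet (↑S : Set (Sym2 V)) ⊔ edge a b := by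
      rw [Finset.coe_insert, Set.insert_eq, fromEdgeSet_union, sup_comm]
      rfl
    have := ConnectedComponent.card_le_card_sup_edge_add_one (fromEdgeSet (↑S : Set (Sym2 V))) a b
    rw [hadd, Finset.card_insert_of_notMem he]
    omega

/-- `T` is the complement of a set of representatives of the components. -/
lemma exists_card_add_card_connectedComponent_eq_and_injOn [Fintype V] (F : SimpleGraph V) :
    ∃ T : Finset V, T.card + Nat.card F.ConnectedComponent = Fintype.card V ∧
      Set.InjOn F.connectedComponentMk (↑T)ᶜ := by
  classical
  have hsurj : F.connectedComponentMk.Surjective := fun c => c.exists_rep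
  set rep := Function.surjInv hsurj
  refine ⟨(Finset.univ.image rep)ᶜ, ?_, ?_⟩
  · rw [Finset.card_compl, Finset.card_image_of_injective _ (Function.injective_surjInv hsurj),
      Finset.card_univ, Nat.card_eq_fintype_card]
    have := Fintype.card_le_of_injective rep (Function.injective_surjInv hsurj)
    omega
  · intro u hu v hv huv
    simp only [Finset.coe_compl, compl_compl, Finset.coe_image, Finset.coe_univ, Set.image_univ,
      Set.mem_range] at hu hv
    obtain ⟨c, rfl⟩ := hu
    obtain ⟨d, rfl⟩ := hv
    rw [Function.surjInv_eq hsurj, Function.surjInv_eq hsurj] at huv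
    rw [huv]

lemma IsMinorOf.of_injective_hom {W V' : Type*} {K : SimpleGraph W} {G : SimpleGraph V}
    {H : SimpleGraph V'} (h : K.IsMinorOf G) (f : G →g H) (hf : Function.Injective f) :
    K.IsMinorOf H := by
  obtain ⟨B, hconn, hdisj, hadj⟩ := h
  refine ⟨fun w => f '' B w, fun w => ?_, fun w₁ w₂ hne => (Set.disjoint_image_iff hf).mpr
    (hdisj hne), fun w₁ w₂ hw => ?_⟩
  · let f' : G.induce (B w) →g H.induce (f '' B w) :=
      ⟨fun x => ⟨f x, x, x.2, rfl⟩, f.map_adj⟩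
    refine (hconn w).map f' ?_
    rintro ⟨_, v, hv, rfl⟩
    exact ⟨⟨v, hv⟩, rfl⟩
  · obtain ⟨u, hu, v, hv, huv⟩ := hadj w₁ w₂ hw
    exact ⟨f u, ⟨u, hu, rfl⟩, f v, ⟨v, hv, rfl⟩, f.map_adj huv⟩

lemma IsPlanar.of_injective_hom {V' : Type*} {G : SimpleGraph V} {H : SimpleGraph V'}
    (h : H.IsPlanar) (f : G →g H) (hf : Function.Injective f) : G.IsPlanar :=
  ⟨fun hK => h.1 (hK.of_injective_hom f hf), fun hK => h.2 (hK.of_injective_hom f hf)⟩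

lemma IsPlanar.deleteVertexSet_of_contractEdges {G : SimpleGraph V} {S : Set (Sym2 V)}
    {T : Set V} (h : (G.contractEdges S).IsPlanar)
    (hT : Set.InjOn (fromEdgeSet S).connectedComponentMk Tᶜ) :
    (G.deleteVertexSet T).IsPlanar :=
  h.of_injective_hom
    ⟨fun u => (fromEdgeSet S).connectedComponentMk u, fun {u v} huv =>
      ⟨fun h => huv.ne (Subtype.ext (hT u.2 v.2 h)), u, v, huv, rfl, rfl⟩⟩
    fun u v huv => Subtype.ext (hT u.2 v.2 huv)

end SimpleGraph

theorem planar_vertex_deletion_of_planar_edge_contraction_general {V : Type*} [Fintype V]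
    (G : SimpleGraph V) (k : ℕ)
    (h : ∃ S : Finset (Sym2 V), ↑S ⊆ G.edgeSet ∧ S.card ≤ k ∧
      (G.contractEdges ↑S).IsPlanar) :
    ∃ T : Finset V, T.card ≤ k ∧ (G.deleteVertexSet ↑T).IsPlanar := by
  obtain ⟨S, -, hSk, hS⟩ := h
  obtain ⟨T, hTcard, hT⟩ :=
    exists_card_add_card_connectedComponent_eq_and_injOn (fromEdgeSet (S : Set (Sym2 V)))
  have hcount := card_le_card_connectedComponent_fromEdgeSet_add_card S
  rw [Nat.card_eq_fintype_card] at hcount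
  exact ⟨T, by omega, hS.deleteVertexSet_of_contractEdges hT⟩

/-- If contracting some set `S` of at most `k` edges of `G` yields a
planar graph, then deleting some set `T` of at most `k` vertices of `G` yields a planar
graph (Golovach, van 't Hof, Paulusma). -/
theorem planar_vertex_deletion_of_planar_edge_contraction {V : Type*} [Fintype V]
    [DecidableEq V] (G : SimpleGraph V) (k : ℕ)
    (h : ∃ S : Finset (Sym2 V), ↑S ⊆ G.edgeSet ∧ S.card ≤ k ∧
      (G.contractEdges ↑S).IsPlanar) :
    ∃ T : Finset V, T.card ≤ k ∧ (G.deleteVertexSet ↑T).IsPlanar :=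
  planar_vertex_deletion_of_planar_edge_contraction_general G k h
end

section
/- Let H be the m-grid and let U be a set of s vertices contained in the central (m − 2ℓ)-grid of H, where ℓ = ⌊s^{1/4}⌋ and m > 2ℓ. Then H contains the ℓ-grid as a minor in such a way that the model (branch set) of each vertex of the ℓ-grid intersects U. -/
open SimpleGraph

/-- The `m`-grid: the Cartesian (box) product of two paths on `m` vertices. -/
def gridGraph (m : ℕ) : SimpleGraph (Fin m × Fin m) :=
  SimpleGraph.pathGraph m □ SimpleGraph.pathGraph m

/-- The vertex set of the central `(m - 2ℓ)`-grid of the `m`-grid: the vertices remaining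
after peeling off the outermost `ℓ` layers. -/
def centralGridVerts (m ℓ : ℕ) : Set (Fin m × Fin m) :=
  {p | ℓ ≤ (p.1 : ℕ) ∧ (p.1 : ℕ) < m - ℓ ∧ ℓ ≤ (p.2 : ℕ) ∧ (p.2 : ℕ) < m - ℓ}

/-!
Since `s ≥ ℓ⁴`, the points of `U` occupy at least `ℓ²` columns or at least `ℓ²` rows; by the
symmetry of the grid we may assume columns `X 0 < X 1 < ⋯ < X (ℓ² - 1)`, each containing a point
of `U`. Run through the `ℓ`-grid along the snake that goes up column `0`, down column `1`, up
column `2`, and so on, and model the vertex `(j, i)`, the `k = snakeIndex ℓ j i`-th vertex of the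
snake, by the vertical line in column `X k` from row `i` to row `m - ℓ + i`; it meets `U` because
the points lie in rows `ℓ, …, m - ℓ - 1`. Consecutive vertices of the snake are joined along row
`ℓ - 1`. The remaining edges `(j, i) — (j + 1, i)` form nested rainbows of horizontal rungs,
drawn at row `i` for even `j` and at row `m - ℓ + i` for odd `j`. The vertical lines below the
rung at row `i` belong to vertices `(j', i')` with `i' > i` and so end above it (dually at the
top): the models are pairwise disjoint.
-/

open Finset

namespace SimpleGraph

variable {V V' W W' : Type*} {H : SimpleGraph V} {H' : SimpleGraph V'}

theorem Iso.connected_induce_preimage (φ : H' ≃g H) {S : Set V} (hS : (H.induce S).Connected) :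
    (H'.induce (φ ⁻¹' S)).Connected :=
  (φ.induce φ.toEquiv.bijective.bijOn_preimage).connected_iff.mpr hS

theorem exists_adj_comm {S T : Set V} :
    (∃ u ∈ S, ∃ v ∈ T, H.Adj u v) ↔ ∃ u ∈ T, ∃ v ∈ S, H.Adj u v :=
  ⟨fun ⟨u, hu, v, hv, huv⟩ => ⟨v, hv, u, hu, huv.symm⟩,
    fun ⟨u, hu, v, hv, huv⟩ => ⟨v, hv, u, hu, huv.symm⟩⟩

structure IsMinorModel (H : SimpleGraph V) (R : SimpleGraph W) (B : W → Set V) : Prop where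
  connected : ∀ a, (H.induce (B a)).Connected
  pairwise_disjoint : Pairwise fun a b => Disjoint (B a) (B b)
  exists_adj : ∀ a b, R.Adj a b → ∃ u ∈ B a, ∃ v ∈ B b, H.Adj u v

theorem IsMinorModel.comap {R : SimpleGraph W} {R' : SimpleGraph W'} {B : W → Set V}
    (hB : H.IsMinorModel R B) (φ : H' ≃g H) (ψ : R' ≃g R) :
    H'.IsMinorModel R' fun a => φ ⁻¹' B (ψ a) where
  connected a := φ.connected_induce_preimage (hB.connected (ψ a))
  pairwise_disjoint _ _ hab := (hB.pairwise_disjoint (ψ.injective.ne hab)).preimage φ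
  exists_adj a b hab := by
    obtain ⟨u, hu, v, hv, huv⟩ := hB.exists_adj _ _ (ψ.map_adj_iff.mpr hab)
    exact ⟨φ.symm u, by simpa using hu, φ.symm v, by simpa using hv, φ.symm.map_adj_iff.mpr huv⟩

end SimpleGraph

theorem gridGraph_adj {m : ℕ} {u v : Fin m × Fin m} :
    (gridGraph m).Adj u v ↔
      ((u.1 : ℕ) + 1 = v.1 ∨ (v.1 : ℕ) + 1 = u.1) ∧ u.2 = v.2 ∨
      ((u.2 : ℕ) + 1 = v.2 ∨ (v.2 : ℕ) + 1 = u.2) ∧ u.1 = v.1 := by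
  rw [gridGraph, boxProd_adj, pathGraph_adj, pathGraph_adj]

def gridGraph.swapIso (m : ℕ) : gridGraph m ≃g gridGraph m := boxProdComm _ _

@[simp]
theorem gridGraph.coe_swapIso (m : ℕ) : ⇑(gridGraph.swapIso m) = Prod.swap := rfl

def vSegment (m x lo hi : ℕ) : Set (Fin m × Fin m) :=
  {v | (v.1 : ℕ) = x ∧ lo ≤ (v.2 : ℕ) ∧ (v.2 : ℕ) < hi}

def hSegment (m y lo hi : ℕ) : Set (Fin m × Fin m) :=
  {v | (v.2 : ℕ) = y ∧ lo ≤ (v.1 : ℕ) ∧ (v.1 : ℕ) < hi}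

section segment

variable {m x y lo hi lo' hi' : ℕ}

theorem connected_induce_vSegment (hx : x < m) (hlo : lo < m) (h : lo < hi) :
    ((gridGraph m).induce (vSegment m x lo hi)).Connected := by
  induction hi, h using Nat.le_induction with
  | base =>
    have : vSegment m x lo (lo + 1) = {(⟨x, hx⟩, ⟨lo, hlo⟩)} := by
      ext v
      simp only [vSegment, Set.mem_ofPred_eq, Set.mem_singleton_iff, Prod.ext_iff, Fin.ext_iff]
      omega
    rw [this, induce_singleton_eq_top]
    exact connected_top
  | succ n hn ih =>
    by_cases hnm : n < m
    · have : vSegment m x lo (n + 1) = vSegment m x lo n ∪ {(⟨x, hx⟩, ⟨n, hnm⟩)} := by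
        ext v
        simp only [vSegment, Set.mem_union, Set.mem_ofPred_eq, Set.mem_singleton_iff,
          Prod.ext_iff, Fin.ext_iff]
        omega
      rw [this]
      refine connected_induce_union (v := (⟨x, hx⟩, ⟨n - 1, by omega⟩)) ih.preconnected
        (induce_singleton_eq_top _ _ ▸ connected_top.preconnected)
        ⟨rfl, by simp only; omega, by simp only; omega⟩ rfl ?_
      rw [gridGraph_adj]
      exact Or.inr ⟨Or.inl (by simp only; omega), rfl⟩
    · have : vSegment m x lo (n + 1) = vSegment m x lo n := by
        ext v
        simp only [vSegment, Set.mem_ofPred_eq]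
        omega
      rwa [this]

theorem connected_induce_hSegment (hy : y < m) (hlo : lo < m) (h : lo < hi) :
    ((gridGraph m).induce (hSegment m y lo hi)).Connected :=
  (gridGraph.swapIso m).connected_induce_preimage (connected_induce_vSegment hy hlo h)

theorem exists_adj_hSegment_vSegment (hy : y < m) (h : lo < hi) (hhi : hi < m)
    (hlo' : lo' ≤ y) (hhi' : y < hi') :
    ∃ u ∈ hSegment m y lo hi, ∃ v ∈ vSegment m hi lo' hi', (gridGraph m).Adj u v := by
  refine ⟨(⟨hi - 1, by omega⟩, ⟨y, hy⟩), ⟨rfl, by simp only; omega, by simp only; omega⟩,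
    (⟨hi, hhi⟩, ⟨y, hy⟩), ⟨rfl, hlo', hhi'⟩, ?_⟩
  rw [gridGraph_adj]
  exact Or.inl ⟨Or.inl (by simp only; omega), rfl⟩

variable {X : ℕ → ℕ} {v : Fin m × Fin m}

theorem StrictMono.of_mem_vSegment_of_mem_hSegment (hX : StrictMono X) {c a b : ℕ}
    (h₁ : v ∈ vSegment m (X c) lo hi) (h₂ : v ∈ hSegment m y (X a) (X b)) :
    c ∈ Set.Ico a b ∧ y ∈ Set.Ico lo hi := by
  obtain ⟨h₁, h₁', h₁''⟩ := h₁
  obtain ⟨h₂, h₂', h₂''⟩ := h₂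
  exact ⟨⟨hX.le_iff_le.1 (by omega), hX.lt_iff_lt.1 (by omega)⟩, by omega, by omega⟩

theorem StrictMono.of_mem_hSegment_of_mem_hSegment (hX : StrictMono X) {y' a b a' b' : ℕ}
    (h₁ : v ∈ hSegment m y (X a) (X b)) (h₂ : v ∈ hSegment m y' (X a') (X b')) :
    y = y' ∧ a < b' ∧ a' < b := by
  obtain ⟨h₁, h₁', h₁''⟩ := h₁
  obtain ⟨h₂, h₂', h₂''⟩ := h₂
  exact ⟨by omega, hX.lt_iff_lt.1 (by omega), hX.lt_iff_lt.1 (by omega)⟩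

end segment

def snakeIndex (ℓ j i : ℕ) : ℕ := j * ℓ + if j % 2 = 0 then i else ℓ - 1 - i

def rungRow (m ℓ j i : ℕ) : ℕ := if j % 2 = 0 then i else m - ℓ + i

/-- For the last vertex of the snake and for the last column `j = ℓ - 1`, the snake piece and the
rung head for an index beyond `ℓ² - 1`; they are harmless and spare case distinctions. -/
def snakeModel (m ℓ : ℕ) (X : ℕ → ℕ) (j i : ℕ) : Set (Fin m × Fin m) :=
  vSegment m (X (snakeIndex ℓ j i)) i (m - ℓ + i + 1) ∪
    hSegment m (ℓ - 1) (X (snakeIndex ℓ j i)) (X (snakeIndex ℓ j i + 1)) ∪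
    hSegment m (rungRow m ℓ j i) (X (snakeIndex ℓ j i)) (X (snakeIndex ℓ (j + 1) i))

section snakeIndex

variable {m ℓ j j' i i' : ℕ}

theorem snakeIndex_div (hi : i < ℓ) : snakeIndex ℓ j i / ℓ = j := by
  have hσ : (if j % 2 = 0 then i else ℓ - 1 - i) < ℓ := by split_ifs <;> omega
  rw [snakeIndex, add_comm, Nat.add_mul_div_right _ _ (by omega), Nat.div_eq_of_lt hσ, zero_add]

theorem le_of_snakeIndex_le (hi : i < ℓ) (hi' : i' < ℓ)
    (h : snakeIndex ℓ j i ≤ snakeIndex ℓ j' i') : j ≤ j' := by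
  simpa only [snakeIndex_div hi, snakeIndex_div hi'] using Nat.div_le_div_right (c := ℓ) h

theorem eq_of_snakeIndex_eq (hi : i < ℓ) (hi' : i' < ℓ)
    (h : snakeIndex ℓ j i = snakeIndex ℓ j' i') : (j, i) = (j', i') := by
  obtain rfl := (le_of_snakeIndex_le hi hi' h.le).antisymm (le_of_snakeIndex_le hi' hi h.ge)
  simp only [snakeIndex, Prod.mk.injEq, true_and] at h ⊢
  split_ifs at h <;> omega

theorem snakeIndex_lt_mul_self (hj : j < ℓ) (hi : i < ℓ) : snakeIndex ℓ j i < ℓ * ℓ := by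
  have := Nat.mul_le_mul_right ℓ (Nat.succ_le_of_lt hj)
  rw [Nat.succ_mul] at this
  simp only [snakeIndex]
  split_ifs <;> omega

theorem snakeIndex_lt_snakeIndex_succ_fst (hi : i < ℓ) :
    snakeIndex ℓ j i < snakeIndex ℓ (j + 1) i := by
  simp only [snakeIndex, Nat.succ_mul]
  split_ifs <;> omega

theorem snakeIndex_succ_snd (hi : i + 1 < ℓ) :
    snakeIndex ℓ j (i + 1) = snakeIndex ℓ j i + 1 ∨
      snakeIndex ℓ j i = snakeIndex ℓ j (i + 1) + 1 := by
  simp only [snakeIndex]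
  split_ifs <;> omega

theorem rungRow_mem_Icc : rungRow m ℓ j i ∈ Set.Icc i (m - ℓ + i) := by
  simp only [rungRow, Set.mem_Icc]
  split_ifs <;> omega

theorem eq_of_snakeIndex_mem_Ico_of_rungRow_mem_Icc (hi : i < ℓ) (hi' : i' < ℓ)
    (hk : snakeIndex ℓ j' i' ∈ Set.Ico (snakeIndex ℓ j i) (snakeIndex ℓ (j + 1) i))
    (hr : rungRow m ℓ j i ∈ Set.Icc i' (m - ℓ + i')) : (j', i') = (j, i) := by
  have h₁ := le_of_snakeIndex_le hi hi' hk.1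
  have h₂ := le_of_snakeIndex_le hi' hi hk.2.le
  obtain rfl | rfl : j' = j ∨ j' = j + 1 := by omega
  all_goals
    simp only [snakeIndex, rungRow, Nat.succ_mul, Set.mem_Ico, Set.mem_Icc, Prod.mk.injEq,
      true_and] at hk hr ⊢
    split_ifs at hk hr <;> omega

theorem eq_of_rungRow_eq (hm : 2 * ℓ ≤ m) (hi : i < ℓ) (hi' : i' < ℓ)
    (hr : rungRow m ℓ j i = rungRow m ℓ j' i')
    (hk : snakeIndex ℓ j i < snakeIndex ℓ (j' + 1) i')
    (hk' : snakeIndex ℓ j' i' < snakeIndex ℓ (j + 1) i) : (j, i) = (j', i') := by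
  have h₁ := le_of_snakeIndex_le hi hi' hk.le
  have h₂ := le_of_snakeIndex_le hi' hi hk'.le
  simp only [rungRow] at hr
  obtain rfl : j = j' := by split_ifs at hr <;> omega
  simp only [snakeIndex, Prod.mk.injEq, true_and] at hk hk' ⊢
  split_ifs at hr hk hk' <;> omega

/-- The only rung on the snake row `ℓ - 1` is one where the snake turns, so it is a piece of the
snake. -/
theorem snakeIndex_succ_fst_of_rungRow_eq (hm : 2 * ℓ ≤ m) (hi : i < ℓ)
    (hr : rungRow m ℓ j i = ℓ - 1) : snakeIndex ℓ (j + 1) i = snakeIndex ℓ j i + 1 := by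
  simp only [rungRow] at hr
  simp only [snakeIndex, Nat.succ_mul]
  split_ifs at hr ⊢ <;> omega

end snakeIndex

section snakeModel

variable {m ℓ j j' i i' : ℕ} {X : ℕ → ℕ}

theorem connected_induce_snakeModel (hm : 2 * ℓ ≤ m) (hX : StrictMono X) (hi : i < ℓ)
    (hXm : X (snakeIndex ℓ j i) < m) :
    ((gridGraph m).induce (snakeModel m ℓ X j i)).Connected := by
  set k := snakeIndex ℓ j i
  have hr := rungRow_mem_Icc (m := m) (ℓ := ℓ) (j := j) (i := i)
  have hrm : rungRow m ℓ j i < m := hr.2.trans_lt (by omega)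
  have hT := connected_induce_vSegment hXm (show i < m by omega) (show i < m - ℓ + i + 1 by omega)
  have hS := connected_induce_hSegment (show ℓ - 1 < m by omega) hXm (hX (Nat.lt_add_one k))
  have hR := connected_induce_hSegment hrm hXm (hX (snakeIndex_lt_snakeIndex_succ_fst hi))
  refine induce_union_connected
    (induce_union_connected hT.preconnected hS.preconnected ?_).preconnected hR.preconnected ?_
  · exact ⟨(⟨X k, hXm⟩, ⟨ℓ - 1, by omega⟩), ⟨rfl, by simp only; omega, by simp only; omega⟩,
      ⟨rfl, le_rfl, hX (Nat.lt_add_one k)⟩⟩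
  · exact ⟨(⟨X k, hXm⟩, ⟨rungRow m ℓ j i, hrm⟩), Or.inl ⟨rfl, hr.1, Nat.lt_succ_of_le hr.2⟩,
      ⟨rfl, le_rfl, hX (snakeIndex_lt_snakeIndex_succ_fst hi)⟩⟩

theorem eq_of_mem_snakeModel (hm : 2 * ℓ ≤ m) (hX : StrictMono X) (hi : i < ℓ) (hi' : i' < ℓ)
    {v : Fin m × Fin m} (hv : v ∈ snakeModel m ℓ X j i) (hv' : v ∈ snakeModel m ℓ X j' i') :
    (j, i) = (j', i') := by
  rcases hv with (hT | hS) | hR <;> rcases hv' with (hT' | hS') | hR'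
  · exact eq_of_snakeIndex_eq hi hi' (hX.injective (hT.1.symm.trans hT'.1))
  · obtain ⟨hk, -⟩ := hX.of_mem_vSegment_of_mem_hSegment hT hS'
    exact eq_of_snakeIndex_eq hi hi' (Nat.eq_of_le_of_lt_succ hk.1 hk.2)
  · obtain ⟨hk, hr⟩ := hX.of_mem_vSegment_of_mem_hSegment hT hR'
    exact eq_of_snakeIndex_mem_Ico_of_rungRow_mem_Icc hi' hi hk ⟨hr.1, Nat.le_of_lt_succ hr.2⟩
  · obtain ⟨hk, -⟩ := hX.of_mem_vSegment_of_mem_hSegment hT' hS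
    exact (eq_of_snakeIndex_eq hi' hi (Nat.eq_of_le_of_lt_succ hk.1 hk.2)).symm
  · obtain ⟨-, hk, hk'⟩ := hX.of_mem_hSegment_of_mem_hSegment hS hS'
    exact eq_of_snakeIndex_eq hi hi' (by omega)
  · obtain ⟨hr, hk, hk'⟩ := hX.of_mem_hSegment_of_mem_hSegment hS hR'
    rw [snakeIndex_succ_fst_of_rungRow_eq hm hi' hr.symm] at hk
    exact eq_of_snakeIndex_eq hi hi' (by omega)
  · obtain ⟨hk, hr⟩ := hX.of_mem_vSegment_of_mem_hSegment hT' hR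
    exact (eq_of_snakeIndex_mem_Ico_of_rungRow_mem_Icc hi hi' hk
      ⟨hr.1, Nat.le_of_lt_succ hr.2⟩).symm
  · obtain ⟨hr, hk, hk'⟩ := hX.of_mem_hSegment_of_mem_hSegment hR hS'
    rw [snakeIndex_succ_fst_of_rungRow_eq hm hi hr] at hk'
    exact eq_of_snakeIndex_eq hi hi' (by omega)
  · obtain ⟨hr, hk, hk'⟩ := hX.of_mem_hSegment_of_mem_hSegment hR hR'
    exact eq_of_rungRow_eq hm hi hi' hr hk hk'

theorem exists_adj_snakeModel_of_snakeIndex_eq_succ (hm : 2 * ℓ ≤ m) (hX : StrictMono X)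
    (hi' : i' < ℓ) (hXm : X (snakeIndex ℓ j' i') < m)
    (h : snakeIndex ℓ j' i' = snakeIndex ℓ j i + 1) :
    ∃ u ∈ snakeModel m ℓ X j i, ∃ v ∈ snakeModel m ℓ X j' i', (gridGraph m).Adj u v := by
  obtain ⟨u, hu, v, hv, huv⟩ := exists_adj_hSegment_vSegment (show ℓ - 1 < m by omega)
    (hX (Nat.lt_add_one (snakeIndex ℓ j i))) (h ▸ hXm) (show i' ≤ ℓ - 1 by omega)
    (show ℓ - 1 < m - ℓ + i' + 1 by omega)
  exact ⟨u, Or.inl (Or.inr hu), v, Or.inl (Or.inl (h ▸ hv)), huv⟩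

theorem exists_adj_snakeModel_succ_fst (hm : ℓ ≤ m) (hi : i < ℓ) (hX : StrictMono X)
    (hXm : X (snakeIndex ℓ (j + 1) i) < m) :
    ∃ u ∈ snakeModel m ℓ X j i, ∃ v ∈ snakeModel m ℓ X (j + 1) i, (gridGraph m).Adj u v := by
  have hr := rungRow_mem_Icc (m := m) (ℓ := ℓ) (j := j) (i := i)
  obtain ⟨u, hu, v, hv, huv⟩ := exists_adj_hSegment_vSegment (hr.2.trans_lt (by omega))
    (hX (snakeIndex_lt_snakeIndex_succ_fst hi)) hXm hr.1 (Nat.lt_succ_of_le hr.2)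
  exact ⟨u, Or.inr hu, v, Or.inl (Or.inl hv), huv⟩

theorem isMinorModel_snakeModel (hm : 2 * ℓ ≤ m) (hX : StrictMono X)
    (hXm : ∀ k < ℓ * ℓ, X k < m) :
    (gridGraph m).IsMinorModel (gridGraph ℓ) fun a => snakeModel m ℓ X a.1 a.2 where
  connected a :=
    connected_induce_snakeModel hm hX a.2.2 (hXm _ (snakeIndex_lt_mul_self a.1.2 a.2.2))
  pairwise_disjoint a b hab := Set.disjoint_left.2 fun v hva hvb => hab <| by
    simpa [Prod.ext_iff, Fin.ext_iff] using eq_of_mem_snakeModel hm hX a.2.2 b.2.2 hva hvb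
  exists_adj := by
    have hXm' (a : Fin ℓ × Fin ℓ) : X (snakeIndex ℓ a.1 a.2) < m :=
      hXm _ (snakeIndex_lt_mul_self a.1.2 a.2.2)
    have h_fst (a b : Fin ℓ × Fin ℓ) (h : (a.1 : ℕ) + 1 = b.1) (h' : a.2 = b.2) :
        ∃ u ∈ snakeModel m ℓ X a.1 a.2, ∃ v ∈ snakeModel m ℓ X b.1 b.2, (gridGraph m).Adj u v := by
      rw [← h, ← h']
      exact exists_adj_snakeModel_succ_fst (by omega) a.2.2 hX (h ▸ h' ▸ hXm' b)
    have h_snd (a b : Fin ℓ × Fin ℓ) (h : (a.2 : ℕ) + 1 = b.2) (h' : a.1 = b.1) :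
        ∃ u ∈ snakeModel m ℓ X a.1 a.2, ∃ v ∈ snakeModel m ℓ X b.1 b.2, (gridGraph m).Adj u v := by
      have hb : (a.2 : ℕ) + 1 < ℓ := h ▸ b.2.2
      have hXb : X (snakeIndex ℓ a.1 (a.2 + 1)) < m := by rw [h, h']; exact hXm' b
      rw [← h, ← h']
      rcases snakeIndex_succ_snd (j := a.1) hb with hk | hk
      · exact exists_adj_snakeModel_of_snakeIndex_eq_succ hm hX hb hXb hk
      · exact exists_adj_comm.1
          (exists_adj_snakeModel_of_snakeIndex_eq_succ hm hX a.2.2 (hXm' a) hk)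
    intro a b hab
    rcases gridGraph_adj.1 hab with ⟨h | h, h'⟩ | ⟨h | h, h'⟩
    · exact h_fst a b h h'
    · exact exists_adj_comm.1 (h_fst b a h h'.symm)
    · exact h_snd a b h h'
    · exact exists_adj_comm.1 (h_snd b a h h'.symm)

end snakeModel

theorem Finset.exists_strictMono_forall_lt_card_mem (C : Finset ℕ) :
    ∃ X : ℕ → ℕ, StrictMono X ∧ ∀ k < #C, X k ∈ C := by
  let e := C.orderEmbOfFin rfl
  have he (k : Fin #C) : e k ≤ C.sup id := le_sup (f := id) (C.orderEmbOfFin_mem rfl k)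
  refine ⟨fun k => if h : k < #C then e ⟨k, h⟩ else C.sup id + k,
    strictMono_nat_of_lt_succ fun k => ?_, fun k hk => by simp [hk, e, orderEmbOfFin_mem]⟩
  by_cases hk : k + 1 < #C
  · rw [dif_pos hk, dif_pos ((Nat.lt_add_one k).trans hk)]
    exact e.strictMono (Fin.mk_lt_mk.2 (Nat.lt_add_one k))
  · rw [dif_neg hk]
    split_ifs
    · exact (he _).trans_lt (Nat.lt_add_of_pos_right k.succ_pos)
    · exact Nat.lt_add_one _

theorem Finset.le_card_image_fst_or_le_card_image_snd {α β : Type*} [DecidableEq α]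
    [DecidableEq β] {U : Finset (α × β)} {n : ℕ} (h : n * n ≤ #U) :
    n ≤ #(U.image Prod.fst) ∨ n ≤ #(U.image Prod.snd) := by
  by_contra! h'
  exact (h.trans ((card_le_card subset_product).trans (card_product _ _).le)).not_gt
    (Nat.mul_lt_mul'' h'.1 h'.2)

section hitting

variable {m ℓ : ℕ} {U : Set (Fin m × Fin m)} {C : Finset (Fin m)}

theorem exists_hitting_gridMinorModel_of_columns (hm : 2 * ℓ ≤ m) (hC : ℓ * ℓ ≤ #C)
    (hCU : ∀ c ∈ C, ∃ p ∈ U, p.1 = c ∧ ℓ ≤ (p.2 : ℕ) ∧ (p.2 : ℕ) < m - ℓ) :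
    ∃ B, (gridGraph m).IsMinorModel (gridGraph ℓ) B ∧ ∀ a, ∃ u ∈ B a, u ∈ U := by
  obtain ⟨X, hX, hXC⟩ := (C.map Fin.valEmbedding).exists_strictMono_forall_lt_card_mem
  have hXU (k : ℕ) (hk : k < ℓ * ℓ) :
      ∃ p ∈ U, (p.1 : ℕ) = X k ∧ ℓ ≤ (p.2 : ℕ) ∧ (p.2 : ℕ) < m - ℓ := by
    obtain ⟨c, hc, hcX⟩ := mem_map.1 (hXC k (by rw [card_map]; omega))
    obtain ⟨p, hpU, rfl, hp⟩ := hCU c hc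
    exact ⟨p, hpU, hcX, hp⟩
  refine ⟨_, isMinorModel_snakeModel hm hX fun k hk => ?_, fun a => ?_⟩
  · obtain ⟨p, -, hp, -⟩ := hXU k hk
    exact hp ▸ p.1.2
  · obtain ⟨p, hpU, hp, hp₁, hp₂⟩ := hXU _ (snakeIndex_lt_mul_self a.1.2 a.2.2)
    exact ⟨p, Or.inl (Or.inl ⟨hp, by omega, by omega⟩), hpU⟩

theorem exists_hitting_gridMinorModel_of_rows (hm : 2 * ℓ ≤ m) (hC : ℓ * ℓ ≤ #C)
    (hCU : ∀ c ∈ C, ∃ p ∈ U, p.2 = c ∧ ℓ ≤ (p.1 : ℕ) ∧ (p.1 : ℕ) < m - ℓ) :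
    ∃ B, (gridGraph m).IsMinorModel (gridGraph ℓ) B ∧ ∀ a, ∃ u ∈ B a, u ∈ U := by
  obtain ⟨B, hB, hBU⟩ := exists_hitting_gridMinorModel_of_columns (U := Prod.swap ⁻¹' U) hm hC
    fun c hc => by
      obtain ⟨p, hpU, hp⟩ := hCU c hc
      exact ⟨p.swap, by simpa using hpU, hp⟩
  refine ⟨_, hB.comap (gridGraph.swapIso m) (gridGraph.swapIso ℓ), fun a => ?_⟩
  obtain ⟨u, hu, huU⟩ := hBU a.swap
  exact ⟨u.swap, by simpa using hu, huU⟩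

end hitting

/-- Demaine, Fomin, Hajiaghayi, Thilikos. Let `H` be the `m`-grid and
`U` a set of `s` vertices contained in the central `(m − 2ℓ)`-grid of `H`, where
`ℓ = ⌊s^{1/4}⌋` and `m > 2ℓ`. Then `H` contains the `ℓ`-grid as a minor such that the
model (branch set) of each vertex of the `ℓ`-grid intersects `U`. -/
theorem grid_minor_hitting_set (m s ℓ : ℕ) (hℓ : ℓ = Nat.sqrt (Nat.sqrt s))
    (hm : 2 * ℓ < m) (U : Finset (Fin m × Fin m)) (hUcard : U.card = s)
    (hUcentral : ↑U ⊆ centralGridVerts m ℓ) :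
    ∃ B : Fin ℓ × Fin ℓ → Set (Fin m × Fin m),
      (∀ a, ((gridGraph m).induce (B a)).Connected) ∧
      (Pairwise fun a b => Disjoint (B a) (B b)) ∧
      (∀ a b, (gridGraph ℓ).Adj a b → ∃ u ∈ B a, ∃ v ∈ B b, (gridGraph m).Adj u v) ∧
      (∀ a, ∃ u ∈ B a, u ∈ U) := by
  have hs : ℓ * ℓ * (ℓ * ℓ) ≤ #U := by
    have h := Nat.sqrt_le (Nat.sqrt s)
    rw [← hℓ] at h
    exact hUcard ▸ (Nat.mul_le_mul h h).trans (Nat.sqrt_le s)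
  obtain ⟨B, hB, hBU⟩ :
      ∃ B, (gridGraph m).IsMinorModel (gridGraph ℓ) B ∧ ∀ a, ∃ u ∈ B a, u ∈ U := by
    rcases le_card_image_fst_or_le_card_image_snd hs with hC | hC
    · refine exists_hitting_gridMinorModel_of_columns hm.le hC fun c hc => ?_
      obtain ⟨p, hpU, rfl⟩ := mem_image.1 hc
      exact ⟨p, hpU, rfl, (hUcentral hpU).2.2⟩
    · refine exists_hitting_gridMinorModel_of_rows hm.le hC fun c hc => ?_
      obtain ⟨p, hpU, rfl⟩ := mem_image.1 hc
      exact ⟨p, hpU, rfl, (hUcentral hpU).1, (hUcentral hpU).2.1⟩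
  exact ⟨B, hB.connected, hB.pairwise_disjoint, hB.exists_adj, hBU⟩
end
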